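/- Let G be a connected k-uniform hypergraph and G' be obtained from G by moving edges e_1,...,e_r from vertices v_1,...,v_r to a vertex u (where u ∉ e_i, v_i ∈ e_i, and e'_i = (e_i \ {v_i}) ∪ {u}), with G' having no multiple edges. If x is a Perron vector of G with x_u ≥ max_{1≤i≤r} x_{v_i}, then ρ(G') > ρ(G). -/

import Mathlib

open Finset

/-- A `k`-uniform hypergraph on vertex type `V`. -/
structure KHypergraph (V : Type*) (k : ℕ) where
  edges : Finset (Finset V)
  uniform : ∀ e ∈ edges, e.card = k

namespace KHypergraph

variable {V : Type*} {k : ℕ}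

/-- The degree of a vertex: the number of edges containing it. -/
def degree [DecidableEq V] (G : KHypergraph V k) (v : V) : ℕ :=
  (G.edges.filter fun e => v ∈ e).card

/-- There is a walk from `a` to `b`. -/
def HasWalk (G : KHypergraph V k) (a b : V) : Prop :=
  ∃ (l : ℕ) (v : Fin (l + 1) → V) (e : Fin l → Finset V),
    v 0 = a ∧ v (Fin.last l) = b ∧
    ∀ i : Fin l, e i ∈ G.edges ∧ v i.castSucc ∈ e i ∧ v i.succ ∈ e i

/-- `G` is connected: every two vertices are joined by a walk. -/
def Connected (G : KHypergraph V k) : Prop := ∀ a b : V, G.HasWalk a b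

/-- A cycle `v_0 e_1 v_1 ⋯ e_l v_0`: pairwise distinct vertices, pairwise
distinct edges, with `{v i, v (i+1)} ⊆ e i` (indices mod `len`). -/
structure HCycle (G : KHypergraph V k) where
  len : ℕ
  two_le : 2 ≤ len
  vtx : Fin len → V
  edg : Fin len → Finset V
  vtx_inj : Function.Injective vtx
  edg_inj : Function.Injective edg
  edg_mem : ∀ i, edg i ∈ G.edges
  fst_mem : ∀ i, vtx i ∈ edg i
  snd_mem : ∀ i : Fin len, vtx ⟨((i : ℕ) + 1) % len, Nat.mod_lt _ (by omega)⟩ ∈ edg i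

/-- `G` contains no cycle. -/
def Acyclic (G : KHypergraph V k) : Prop := IsEmpty (HCycle G)

/-- A hypertree is a connected acyclic hypergraph. -/
def IsHypertree (G : KHypergraph V k) : Prop := G.Connected ∧ G.Acyclic

/-- `G` is unicyclic: connected with exactly one cycle (any two cycles have
the same vertex set and the same edge set). -/
def IsUnicyclic (G : KHypergraph V k) : Prop :=
  G.Connected ∧ Nonempty (HCycle G) ∧
    ∀ C C' : HCycle G,
      Set.range C.vtx = Set.range C'.vtx ∧ Set.range C.edg = Set.range C'.edg

/-- The girth: the minimum length of a cycle. -/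
noncomputable def girth (G : KHypergraph V k) : ℕ := sInf {l | ∃ C : HCycle G, C.len = l}

/-- `G` is linear: any two distinct edges meet in at most one vertex. -/
def Linear [DecidableEq V] (G : KHypergraph V k) : Prop :=
  ∀ e ∈ G.edges, ∀ f ∈ G.edges, e ≠ f → (e ∩ f).card ≤ 1

/-- Bicyclic: connected with cyclomatic number `m(k-1) - n + 1 = 2`. -/
def IsBicyclic [Fintype V] (G : KHypergraph V k) : Prop :=
  G.Connected ∧ G.edges.card * (k - 1) = Fintype.card V + 1

end KHypergraph

/-- Isomorphism of `k`-uniform hypergraphs. -/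
def HIso {V W : Type*} [DecidableEq W] {k : ℕ} (G : KHypergraph V k) (H : KHypergraph W k) : Prop :=
  ∃ φ : V ≃ W, ∀ e : Finset V, e ∈ G.edges ↔ e.image (φ : V → W) ∈ H.edges

section Tensor

variable {V : Type*} {k : ℕ}

/-- Prepend `i` to a `(k-1)`-tuple, obtaining a `k`-tuple. -/
def tupleCons (i : V) (g : Fin (k - 1) → V) : Fin k → V :=
  fun j => if h : (j : ℕ) = 0 then i else g ⟨(j : ℕ) - 1, by have := j.isLt; omega⟩

/-- `(T x^{k-1})_i = ∑_{i_2,…,i_k} t_{i i_2 … i_k} x_{i_2} ⋯ x_{i_k}`. -/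
def tApply [Fintype V] {R : Type*} [CommSemiring R] (T : (Fin k → V) → R) (x : V → R) (i : V) : R :=
  ∑ g : Fin (k - 1) → V, T (tupleCons i g) * ∏ j, x (g j)

/-- `lam ∈ ℂ` is an eigenvalue of the real tensor `T`:
`T x^{k-1} = lam x^{[k-1]}` for some `x ≠ 0`. -/
def IsEig [Fintype V] (T : (Fin k → V) → ℝ) (lam : ℂ) : Prop :=
  ∃ x : V → ℂ, x ≠ 0 ∧ ∀ i, tApply (fun f => ((T f : ℝ) : ℂ)) x i = lam * x i ^ (k - 1)

/-- The spectral radius of a tensor: the maximum modulus of its eigenvalues. -/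
noncomputable def specRad [Fintype V] (T : (Fin k → V) → ℝ) : ℝ :=
  sSup {r : ℝ | ∃ lam : ℂ, IsEig T lam ∧ ‖lam‖ = r}

/-- The arc `i → j` of the digraph `G(T)` associated with a nonnegative tensor. -/
def arcRel (T : (Fin k → V) → ℝ) (i j : V) : Prop :=
  ∃ g : Fin (k - 1) → V, 0 < T (tupleCons i g) ∧ ∃ l, g l = j

/-- `T` is weakly irreducible: the associated digraph is strongly connected. -/
def WeaklyIrreducible (T : (Fin k → V) → ℝ) : Prop :=
  ∀ a b : V, Relation.ReflTransGen (arcRel T) a b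

/-- The adjacency tensor of a `k`-uniform hypergraph: entry `1/(k-1)!` on
tuples of distinct vertices forming an edge, `0` otherwise. -/
noncomputable def adjTensor [Fintype V] [DecidableEq V] (G : KHypergraph V k) : (Fin k → V) → ℝ :=
  fun f => if Function.Injective f ∧ Finset.image f Finset.univ ∈ G.edges
    then ((Nat.factorial (k - 1) : ℝ))⁻¹ else 0

/-- The spectral radius of a hypergraph. -/
noncomputable def hSpecRad [Fintype V] [DecidableEq V] (G : KHypergraph V k) : ℝ :=
  specRad (adjTensor G)

/-- `x` is a Perron vector of `G`: a positive eigenvector for `ρ(G)`. -/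
def IsPerron [Fintype V] [DecidableEq V] (G : KHypergraph V k) (x : V → ℝ) : Prop :=
  (∀ v, 0 < x v) ∧ ∀ i, tApply (adjTensor G) x i = hSpecRad G * x i ^ (k - 1)

end Tensor

section Shapes

variable {V : Type*} {k : ℕ}

/-- A hyperstar: all edges share a common vertex `c`, and pairwise meet exactly in `c`. -/
def IsHyperstar [DecidableEq V] (G : KHypergraph V k) : Prop :=
  G.Connected ∧ ∃ c : V, (∀ e ∈ G.edges, c ∈ e) ∧
    ∀ e ∈ G.edges, ∀ f ∈ G.edges, e ≠ f → e ∩ f = {c}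

/-- `H` is the `k`-th power of the simple graph (2-uniform hypergraph) `B`:
each edge of `B` is enlarged by `k-2` new vertices, all distinct. -/
def IsPowerOf [DecidableEq V] {W : Type*} (H : KHypergraph V k) (B : KHypergraph W 2) : Prop :=
  ∃ (ι : W ↪ V) (ν : ({e // e ∈ B.edges} × Fin (k - 2)) ↪ V),
    (∀ w p, ι w ≠ ν p) ∧
    (∀ v : V, (∃ w, ι w = v) ∨ (∃ p, ν p = v)) ∧
    H.edges = B.edges.attach.image
      (fun e => e.1.map ι ∪ Finset.image (fun j : Fin (k - 2) => ν (e, j)) Finset.univ)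

/-- `H` is a power hypergraph: the `k`-th power of some simple graph. -/
def IsPowerHG [DecidableEq V] (H : KHypergraph V k) : Prop :=
  ∃ (W : Type) (B : KHypergraph W 2), IsPowerOf H B

/-- The shape of `S_{m,g}^k`: a linear unicyclic hypergraph with `m` edges and
girth `g`, whose cycle has length `g`, all non-cycle edges being pendant edges
at a common cycle vertex `u` (their other vertices having degree one). -/
def IsSmg [DecidableEq V] (g m : ℕ) (G : KHypergraph V k) : Prop :=
  G.IsUnicyclic ∧ G.Linear ∧ G.edges.card = m ∧ G.girth = g ∧
    ∃ (C : KHypergraph.HCycle G) (u : V), C.len = g ∧ (∃ i, C.vtx i = u) ∧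
      ∀ f ∈ G.edges, (∃ i, C.edg i = f) ∨
        (u ∈ f ∧ ∀ w ∈ f, w ≠ u → G.degree w = 1)

/-- The shape of `B_m^P`: the `k`-th power of `K_4` minus an edge (two triangles
on `a,b,c` and `a,b,d` sharing base `a b`) with a hyperstar of `m - 5` edges
attached at the degree-3 vertex `a`. -/
def IsBmP [DecidableEq V] (m : ℕ) (G : KHypergraph V k) : Prop :=
  G.Connected ∧ G.edges.card = m ∧
    ∃ (a b c d : V) (f : Fin 5 → Finset V),
      (a ≠ b ∧ a ≠ c ∧ a ≠ d ∧ b ≠ c ∧ b ≠ d ∧ c ≠ d) ∧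
      Function.Injective f ∧ (∀ i, f i ∈ G.edges) ∧
      f 0 ∩ {a, b, c, d} = {a, b} ∧
      f 1 ∩ {a, b, c, d} = {a, c} ∧
      f 2 ∩ {a, b, c, d} = {b, c} ∧
      f 3 ∩ {a, b, c, d} = {a, d} ∧
      f 4 ∩ {a, b, c, d} = {b, d} ∧
      (∀ i, ∀ w ∈ f i, w ∉ ({a, b, c, d} : Finset V) → G.degree w = 1) ∧
      (∀ e ∈ G.edges, (∀ i, f i ≠ e) → a ∈ e ∧ ∀ w ∈ e, w ≠ a → G.degree w = 1)

/-- The core `G_5`: an edge `e ⊇ {v1,v2,v3}` and three further edges joining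
`v1, v2, v3` to a common vertex `w` outside `e`; all vertices of these four
edges other than `w, v1, v2, v3` have degree one. -/
def G5Core [DecidableEq V] (G : KHypergraph V k) (w v1 v2 v3 : V) (e g1 g2 g3 : Finset V) : Prop :=
  (w ≠ v1 ∧ w ≠ v2 ∧ w ≠ v3 ∧ v1 ≠ v2 ∧ v1 ≠ v3 ∧ v2 ≠ v3) ∧
  (e ∈ G.edges ∧ g1 ∈ G.edges ∧ g2 ∈ G.edges ∧ g3 ∈ G.edges) ∧
  (e ≠ g1 ∧ e ≠ g2 ∧ e ≠ g3 ∧ g1 ≠ g2 ∧ g1 ≠ g3 ∧ g2 ≠ g3) ∧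
  e ∩ {w, v1, v2, v3} = {v1, v2, v3} ∧
  g1 ∩ {w, v1, v2, v3} = {w, v1} ∧
  g2 ∩ {w, v1, v2, v3} = {w, v2} ∧
  g3 ∩ {w, v1, v2, v3} = {w, v3} ∧
  (∀ f ∈ ({e, g1, g2, g3} : Finset (Finset V)), ∀ x ∈ f, x ∉ ({w, v1, v2, v3} : Finset V) →
    G.degree x = 1)

/-- `B_m^L(1)`: `G_5` with a hyperstar of `m-4` edges attached at the degree-3 vertex `w`. -/
def IsBmL1 [DecidableEq V] (m : ℕ) (G : KHypergraph V k) : Prop :=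
  G.Connected ∧ G.edges.card = m ∧
    ∃ (w v1 v2 v3 : V) (e g1 g2 g3 : Finset V), G5Core G w v1 v2 v3 e g1 g2 g3 ∧
      ∀ f ∈ G.edges, f ∉ ({e, g1, g2, g3} : Finset (Finset V)) →
        w ∈ f ∧ ∀ x ∈ f, x ≠ w → G.degree x = 1

/-- `B_m^L(2)`: `G_5` with a hyperstar of `m-4` edges attached at a degree-2 vertex `v1`. -/
def IsBmL2 [DecidableEq V] (m : ℕ) (G : KHypergraph V k) : Prop :=
  G.Connected ∧ G.edges.card = m ∧
    ∃ (w v1 v2 v3 : V) (e g1 g2 g3 : Finset V), G5Core G w v1 v2 v3 e g1 g2 g3 ∧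
      ∀ f ∈ G.edges, f ∉ ({e, g1, g2, g3} : Finset (Finset V)) →
        v1 ∈ f ∧ ∀ x ∈ f, x ≠ v1 → G.degree x = 1

/-- The support (vertex set) of a set of edges. -/
def esupp {V : Type*} [DecidableEq V] (E : Finset (Finset V)) : Finset V := E.sup id

end Shapes

/-! The Rayleigh bound `k L_H(z) ≤ ρ(H) ∑ z_i^k` for `z ≥ 0` comes from a maximizer of the
Lagrangian `L_H` on the nonnegative unit `k`-sphere, which is an eigenvector by the Lagrange
multiplier condition. Moving `e_i` from `v_i` to `u` multiplies its weight by `x_u / x_{v_i} ≥ 1`,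
so `ρ(G) ∑ x_i^k = k L_G(x) ≤ k L_{G'}(x) ≤ ρ(G') ∑ x_i^k`. If `ρ(G') ≤ ρ(G)`, then `x` attains
the Rayleigh bound for `G'`, so it is an eigenvector of `G'` for `ρ(G)`; but at `u` the
`G'`-eigenequation exceeds the `G`-eigenequation by the positive weights of the moved edges. -/

namespace KHypergraph

variable {V : Type*} {k : ℕ}

/-- `k * H.lagrangian y` is `A(H) y^k`. -/
def lagrangian (H : KHypergraph V k) (y : V → ℝ) : ℝ :=
  ∑ f ∈ H.edges, ∏ w ∈ f, y w

/-- `H.lagrangianPartial i y` is `(A(H) y^{k-1})_i`, the derivative of `H.lagrangian` in `y i`. -/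
def lagrangianPartial [DecidableEq V] (H : KHypergraph V k) (i : V) (y : V → ℝ) : ℝ :=
  ∑ f ∈ H.edges with i ∈ f, ∏ w ∈ f.erase i, y w

theorem lagrangian_nonneg (H : KHypergraph V k) {y : V → ℝ} (hy : 0 ≤ y) : 0 ≤ H.lagrangian y :=
  sum_nonneg fun _ _ => prod_nonneg fun w _ => hy w

theorem lagrangian_smul (H : KHypergraph V k) (c : ℝ) (y : V → ℝ) :
    H.lagrangian (c • y) = c ^ k * H.lagrangian y := by
  simp only [lagrangian, mul_sum, Pi.smul_apply, smul_eq_mul]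
  refine sum_congr rfl fun f hf => ?_
  rw [prod_mul_distrib, prod_const, H.uniform f hf]

theorem continuous_lagrangian (H : KHypergraph V k) : Continuous H.lagrangian := by
  unfold lagrangian
  fun_prop

variable [DecidableEq V]

theorem lagrangianPartial_nonneg (H : KHypergraph V k) (i : V) {y : V → ℝ} (hy : 0 ≤ y) :
    0 ≤ H.lagrangianPartial i y :=
  sum_nonneg fun _ _ => prod_nonneg fun w _ => hy w

theorem lagrangian_update (H : KHypergraph V k) (y : V → ℝ) (i : V) (b : ℝ) :
    H.lagrangian (Function.update y i b) =
      H.lagrangian y + (b - y i) * H.lagrangianPartial i y := by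
  simp only [lagrangian, lagrangianPartial, sum_filter, mul_sum, ← sum_add_distrib]
  refine sum_congr rfl fun f _ => ?_
  split_ifs with hi
  · rw [prod_update_of_mem hi, sdiff_singleton_eq_erase, ← mul_prod_erase f y hi]
    ring
  · rw [prod_update_of_notMem hi, mul_zero, add_zero]

theorem sum_mul_lagrangianPartial [Fintype V] (H : KHypergraph V k) (y : V → ℝ) :
    ∑ i, y i * H.lagrangianPartial i y = k * H.lagrangian y := by
  simp only [lagrangian, lagrangianPartial, sum_filter, mul_sum]
  rw [sum_comm]
  refine sum_congr rfl fun f hf => ?_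
  simp only [mul_ite, mul_zero]
  rw [← sum_filter, filter_mem_eq_inter, univ_inter,
    sum_congr rfl fun i hi => mul_prod_erase f y hi, sum_const, H.uniform f hf, nsmul_eq_mul]

end KHypergraph

section AdjTensor

open KHypergraph

variable {V : Type*}

theorem tupleCons_eq_cons {m : ℕ} (i : V) (g : Fin m → V) :
    tupleCons (k := m + 1) i g = Fin.cons i g := by
  funext j
  refine Fin.cases ?_ (fun j => ?_) j <;> simp [tupleCons]

variable [DecidableEq V]

theorem image_cons_univ {m : ℕ} (i : V) (g : Fin m → V) :
    image (Fin.cons i g : Fin (m + 1) → V) univ = insert i (image g univ) := by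
  ext w; simp [Fin.exists_fin_succ, eq_comm]

variable [Fintype V] {k : ℕ}

theorem card_injective_image_eq {m : ℕ} (s : Finset V) (hs : s.card = m) :
    #{g : Fin m → V | Function.Injective g ∧ image g univ = s} = m.factorial := by
  have hm : Fintype.card (Fin m) = Fintype.card s := by simp [hs]
  have hinj : Function.Injective fun (φ : Fin m ≃ s) j => (φ j : V) :=
    fun φ ψ h => Equiv.ext fun j => Subtype.ext (congrFun h j)
  have hcard : Fintype.card (Fin m ≃ s) = m.factorial := by
    rw [Fintype.card_equiv (Fintype.equivOfCardEq hm), Fintype.card_fin]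
  rw [← hcard, ← card_univ, ← card_image_of_injective univ hinj]
  congr 1
  ext g
  simp only [mem_filter, mem_univ, true_and, mem_image]
  constructor
  · rintro ⟨hg, himg⟩
    have hmem : ∀ j, g j ∈ s := fun j => himg ▸ mem_image_of_mem g (mem_univ j)
    refine ⟨Equiv.ofBijective (fun j => ⟨g j, hmem j⟩) ?_, rfl⟩
    exact (Fintype.bijective_iff_injective_and_card _).2
      ⟨fun a b h => hg (congrArg Subtype.val h), hm⟩
  · rintro ⟨φ, rfl⟩
    refine ⟨fun a b h => φ.injective (Subtype.ext h), ?_⟩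
    ext w
    simp only [mem_image, mem_univ, true_and]
    exact ⟨fun ⟨j, hj⟩ => hj ▸ (φ j).2, fun hw => ⟨φ.symm ⟨w, hw⟩, by simp⟩⟩

theorem sum_prod_of_injective_image_eq {m : ℕ} (s : Finset V) (hs : s.card = m) (y : V → ℝ) :
    ∑ g : Fin m → V with Function.Injective g ∧ image g univ = s, ∏ j, y (g j) =
      m.factorial * ∏ w ∈ s, y w := by
  rw [← card_injective_image_eq s hs, ← nsmul_eq_mul, ← sum_const]
  refine sum_congr rfl fun g hg => ?_
  obtain ⟨hinj, rfl⟩ := (mem_filter.1 hg).2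
  exact (prod_image fun a _ b _ h => hinj h).symm

theorem tApply_adjTensor (hk : 1 ≤ k) (H : KHypergraph V k) (y : V → ℝ) (i : V) :
    tApply (adjTensor H) y i = H.lagrangianPartial i y := by
  obtain ⟨m, rfl⟩ := Nat.exists_eq_add_of_le' hk
  change ∑ g : Fin m → V, adjTensor H (tupleCons i g) * ∏ j, y (g j) = _
  simp only [tupleCons_eq_cons, adjTensor, ite_mul, zero_mul, ← sum_filter, ← mul_sum,
    Nat.add_sub_cancel, Fin.cons_injective_iff, image_cons_univ]
  rw [← sum_fiberwise_of_maps_to (g := fun g : Fin m → V => insert i (image g univ))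
    (t := H.edges.filter (i ∈ ·)) ?_, mul_sum, lagrangianPartial]
  · refine sum_congr rfl fun f hf => ?_
    obtain ⟨hfH, hif⟩ := mem_filter.1 hf
    have hfiber : univ.filter (fun g : Fin m → V => ((i ∉ Set.range g ∧ Function.Injective g) ∧
          insert i (image g univ) ∈ H.edges) ∧ insert i (image g univ) = f) =
        univ.filter (fun g : Fin m → V => Function.Injective g ∧ image g univ = f.erase i) := by
      ext g
      simp only [mem_filter, mem_univ, true_and]
      constructor
      · rintro ⟨⟨⟨hi, hg⟩, -⟩, rfl⟩
        exact ⟨hg, by rw [erase_insert (by simpa using hi)]⟩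
      · rintro ⟨hg, himg⟩
        have hi : i ∉ image g univ := himg ▸ notMem_erase i f
        have hins : insert i (image g univ) = f := by rw [himg, insert_erase hif]
        exact ⟨⟨⟨by simpa using hi, hg⟩, hins ▸ hfH⟩, hins⟩
    have hcard : (f.erase i).card = m := by
      rw [card_erase_of_mem hif, H.uniform f hfH, Nat.add_sub_cancel]
    rw [filter_filter, hfiber, sum_prod_of_injective_image_eq _ hcard, ← mul_assoc,
      inv_mul_cancel₀ (by positivity), one_mul]
  · intro g hg
    simp only [mem_filter, mem_univ, true_and] at hg ⊢
    exact ⟨hg.2, mem_insert_self _ _⟩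

end AdjTensor

section Spectrum

open KHypergraph

variable {V : Type*} [Fintype V] [DecidableEq V] {k : ℕ}

theorem adjTensor_nonneg (H : KHypergraph V k) (f : Fin k → V) : 0 ≤ adjTensor H f := by
  unfold adjTensor
  split_ifs <;> positivity

theorem adjTensor_le_one (H : KHypergraph V k) (f : Fin k → V) : adjTensor H f ≤ 1 := by
  unfold adjTensor
  split_ifs
  · exact inv_le_one_of_one_le₀ (mod_cast (k - 1).factorial_pos)
  · exact zero_le_one

theorem norm_le_of_isEig_adjTensor (H : KHypergraph V k) {lam : ℂ}
    (h : IsEig (adjTensor H) lam) : ‖lam‖ ≤ Fintype.card V ^ (k - 1) := by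
  obtain ⟨x, hx0, heq⟩ := h
  obtain ⟨j, hj⟩ := Function.ne_iff.1 hx0
  obtain ⟨i, -, hi⟩ := exists_max_image univ (‖x ·‖) ⟨j, mem_univ j⟩
  have hM : 0 < ‖x i‖ := (norm_pos_iff.2 hj).trans_le (hi j (mem_univ j))
  have hterm : ∀ g : Fin (k - 1) → V,
      ‖((adjTensor H (tupleCons i g) : ℝ) : ℂ) * ∏ l, x (g l)‖ ≤ ‖x i‖ ^ (k - 1) := by
    intro g
    rw [norm_mul, norm_prod, Complex.norm_real, Real.norm_of_nonneg (adjTensor_nonneg H _)]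
    calc adjTensor H (tupleCons i g) * ∏ l, ‖x (g l)‖ ≤ 1 * ∏ _l : Fin (k - 1), ‖x i‖ :=
          mul_le_mul (adjTensor_le_one H _) (prod_le_prod (fun _ _ => norm_nonneg _)
            fun l _ => hi _ (mem_univ _)) (by positivity) zero_le_one
      _ = ‖x i‖ ^ (k - 1) := by simp
  refine le_of_mul_le_mul_right ?_ (pow_pos hM (k - 1))
  calc ‖lam‖ * ‖x i‖ ^ (k - 1) = ‖tApply (fun f => ((adjTensor H f : ℝ) : ℂ)) x i‖ := by
        rw [heq i, norm_mul, norm_pow]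
    _ ≤ ∑ _g : Fin (k - 1) → V, ‖x i‖ ^ (k - 1) :=
        (norm_sum_le _ _).trans (sum_le_sum fun g _ => hterm g)
    _ = Fintype.card V ^ (k - 1) * ‖x i‖ ^ (k - 1) := by simp

theorem le_hSpecRad (H : KHypergraph V k) {c : ℝ} (hc : 0 ≤ c) (h : IsEig (adjTensor H) c) :
    c ≤ hSpecRad H :=
  le_csSup ⟨_, by rintro r ⟨lam, hlam, rfl⟩; exact norm_le_of_isEig_adjTensor H hlam⟩
    ⟨c, h, by rw [Complex.norm_real, Real.norm_of_nonneg hc]⟩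

theorem isEig_adjTensor_of_lagrangianPartial_eq (hk : 1 ≤ k) (H : KHypergraph V k)
    {y : V → ℝ} (hy : y ≠ 0) {c : ℝ} (h : ∀ i, H.lagrangianPartial i y = c * y i ^ (k - 1)) :
    IsEig (adjTensor H) c := by
  refine ⟨fun w => y w, fun h0 => hy (funext fun w => by simpa using congrFun h0 w), fun i => ?_⟩
  have := congrArg ((↑) : ℝ → ℂ) ((tApply_adjTensor hk H y i).trans (h i))
  push_cast [tApply] at this ⊢
  exact this

theorem IsPerron.lagrangianPartial_eq (hk : 1 ≤ k) {G : KHypergraph V k} {x : V → ℝ}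
    (hx : IsPerron G x) (i : V) : G.lagrangianPartial i x = hSpecRad G * x i ^ (k - 1) :=
  (tApply_adjTensor hk G x i).symm.trans (hx.2 i)

theorem IsPerron.lagrangian_eq (hk : 1 ≤ k) {G : KHypergraph V k} {x : V → ℝ}
    (hx : IsPerron G x) : k * G.lagrangian x = hSpecRad G * ∑ i, x i ^ k := by
  rw [← sum_mul_lagrangianPartial, mul_sum]
  refine sum_congr rfl fun i _ => ?_
  rw [hx.lagrangianPartial_eq hk, mul_left_comm, ← pow_succ', Nat.sub_add_cancel hk]

end Spectrum

open Filter Topology in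
theorem eq_mul_pow_of_forall_mul_le {a c d : ℝ} {k : ℕ} (hk : 2 ≤ k) (ha : 0 ≤ a) (hd : 0 ≤ d)
    (h : ∀ t, -a ≤ t → t * d ≤ c * ((a + t) ^ k - a ^ k)) : d = c * k * a ^ (k - 1) := by
  rcases ha.eq_or_lt with rfl | ha
  · rw [zero_pow (by omega), mul_zero]
    have hlim : Tendsto (fun t : ℝ => c * t ^ (k - 1)) (𝓝[>] 0) (𝓝 0) := by
      have hcont : Continuous fun t : ℝ => c * t ^ (k - 1) := by fun_prop
      simpa [zero_pow (show k - 1 ≠ 0 by omega)] using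
        (hcont.tendsto 0).mono_left nhdsWithin_le_nhds
    have hev : ∀ᶠ t in 𝓝[>] 0, d ≤ c * t ^ (k - 1) := by
      filter_upwards [self_mem_nhdsWithin] with t (ht : 0 < t)
      have h' := h t (by simpa using ht.le)
      rw [zero_add, zero_pow (by omega), sub_zero, ← Nat.sub_add_cancel (by omega : 1 ≤ k),
        pow_succ, ← mul_assoc, mul_comm t] at h'
      exact le_of_mul_le_mul_right h' ht
    exact le_antisymm (ge_of_tendsto hlim hev) hd
  · have hmax : IsLocalMax (fun t => t * d - c * ((a + t) ^ k - a ^ k)) 0 := by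
      filter_upwards [Ioi_mem_nhds (neg_lt_zero.2 ha)] with t ht
      simpa using h t (le_of_lt ht)
    have hpow : HasDerivAt (fun t => (a + t) ^ k) (k * a ^ (k - 1)) 0 := by
      simpa using ((hasDerivAt_id (0 : ℝ)).const_add a).fun_pow k
    have hderiv := (hasDerivAt_mul_const d).sub ((hpow.sub_const (a ^ k)).const_mul c)
    linear_combination hmax.hasDerivAt_eq_zero hderiv

section Variational

variable {V : Type*} [Fintype V] {k : ℕ}

variable (V k) in
def nonnegSphere : Set (V → ℝ) := {y | 0 ≤ y ∧ ∑ i, y i ^ k = 1}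

theorem isCompact_nonnegSphere (hk : 1 ≤ k) : IsCompact (nonnegSphere V k) := by
  have hclosed : IsClosed (nonnegSphere V k) :=
    (isClosed_le continuous_const continuous_id).inter (isClosed_eq (by fun_prop) continuous_const)
  refine (isCompact_Icc (a := 0) (b := 1)).of_isClosed_subset hclosed
    fun y ⟨hy0, hy1⟩ => ⟨hy0, fun i => ?_⟩
  by_contra! hyi
  have := single_le_sum (fun j _ => pow_nonneg (hy0 j) k) (mem_univ i)
  rw [hy1] at this
  exact (one_lt_pow₀ hyi (by omega)).not_ge this

theorem nonnegSphere_nonempty [DecidableEq V] [Nonempty V] (hk : k ≠ 0) :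
    (nonnegSphere V k).Nonempty := by
  obtain ⟨v⟩ := ‹Nonempty V›
  refine ⟨Pi.single v 1, fun j => ?_, ?_⟩
  · by_cases hj : j = v <;> simp [hj]
  · rw [sum_eq_single v (fun j _ hj => by simp [hj, hk]) (by simp)]
    simp

theorem sum_pow_update [DecidableEq V] (y : V → ℝ) (i : V) (b : ℝ) :
    ∑ j, Function.update y i b j ^ k = ∑ j, y j ^ k + b ^ k - y i ^ k := by
  rw [← add_sum_erase _ _ (mem_univ i), ← add_sum_erase _ (fun j => y j ^ k) (mem_univ i),
    Function.update_self,
    sum_congr rfl fun j hj => by rw [Function.update_of_ne (ne_of_mem_erase hj)]]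
  ring

namespace KHypergraph

theorem lagrangian_le_mul_of_isMaxOn (hk : 1 ≤ k) (H : KHypergraph V k) {y : V → ℝ}
    (hy : IsMaxOn H.lagrangian (nonnegSphere V k) y) {z : V → ℝ} (hz : 0 ≤ z) :
    H.lagrangian z ≤ H.lagrangian y * ∑ i, z i ^ k := by
  rcases (sum_nonneg fun i _ => pow_nonneg (hz i) k : 0 ≤ ∑ i, z i ^ k).eq_or_lt with hN | hN
  · have hz0 : z = 0 := funext fun i => pow_eq_zero_iff (by omega) |>.1 <|
      (sum_eq_zero_iff_of_nonneg fun j _ => pow_nonneg (hz j) k).1 hN.symm i (mem_univ i)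
    have := H.lagrangian_smul 0 0
    rw [zero_smul, zero_pow (by omega), zero_mul] at this
    rw [← hN, mul_zero, hz0, this]
  · set N := ∑ i, z i ^ k
    set c := (N ^ (k⁻¹ : ℝ))⁻¹
    have hck : c ^ k = N⁻¹ := by rw [inv_pow, Real.rpow_inv_natCast_pow hN.le (by omega)]
    have hcz : c • z ∈ nonnegSphere V k := by
      refine ⟨smul_nonneg (by positivity) hz, ?_⟩
      simp only [Pi.smul_apply, smul_eq_mul, mul_pow, ← mul_sum, hck]
      exact inv_mul_cancel₀ hN.ne'
    have := isMaxOn_iff.1 hy _ hcz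
    rw [lagrangian_smul, hck, inv_mul_le_iff₀ hN] at this
    linarith

variable [DecidableEq V]

theorem lagrangianPartial_eq_of_forall_le (hk : 2 ≤ k) (H : KHypergraph V k) {c : ℝ}
    (hc : ∀ z, 0 ≤ z → k * H.lagrangian z ≤ c * ∑ i, z i ^ k) {y : V → ℝ} (hy0 : 0 ≤ y)
    (hy : k * H.lagrangian y = c * ∑ i, y i ^ k) (i : V) :
    H.lagrangianPartial i y = c * y i ^ (k - 1) := by
  have hk0 : (k : ℝ) ≠ 0 := by positivity
  have := eq_mul_pow_of_forall_mul_le (c := c) hk (hy0 i)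
    (mul_nonneg (Nat.cast_nonneg k) (H.lagrangianPartial_nonneg i hy0)) fun t ht => by
      have hz : 0 ≤ Function.update y i (y i + t) := by
        intro j
        rcases eq_or_ne j i with rfl | hj
        · simp only [Function.update_self, Pi.zero_apply]; linarith
        · simpa [hj] using hy0 j
      have := hc _ hz
      rw [lagrangian_update, sum_pow_update] at this
      linear_combination this - hy
  apply mul_left_cancel₀ hk0
  linear_combination this

theorem lagrangian_le_hSpecRad [Nonempty V] (hk : 2 ≤ k) (H : KHypergraph V k) {z : V → ℝ}
    (hz : 0 ≤ z) : k * H.lagrangian z ≤ hSpecRad H * ∑ i, z i ^ k := by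
  obtain ⟨y, ⟨hy0, hy1⟩, hymax⟩ :=
    (isCompact_nonnegSphere (V := V) (k := k) (by omega)).exists_isMaxOn
      (nonnegSphere_nonempty (by omega)) H.continuous_lagrangian.continuousOn
  set c := k * H.lagrangian y
  have hbound : ∀ z, 0 ≤ z → k * H.lagrangian z ≤ c * ∑ i, z i ^ k := fun z hz => by
    rw [mul_assoc]
    exact mul_le_mul_of_nonneg_left (H.lagrangian_le_mul_of_isMaxOn (by omega) hymax hz)
      (Nat.cast_nonneg k)
  have hy_ne : y ≠ 0 := by
    rintro rfl
    simp [zero_pow (show k ≠ 0 by omega)] at hy1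
  have hc : c ≤ hSpecRad H := le_hSpecRad H (mul_nonneg (Nat.cast_nonneg k)
    (H.lagrangian_nonneg hy0)) (isEig_adjTensor_of_lagrangianPartial_eq (by omega) H hy_ne
      (H.lagrangianPartial_eq_of_forall_le hk hbound hy0 (by rw [hy1, mul_one])))
  exact (hbound z hz).trans
    (mul_le_mul_of_nonneg_right hc (sum_nonneg fun i _ => pow_nonneg (hz i) k))

end KHypergraph

end Variational

namespace KHypergraph

variable {V : Type*} [DecidableEq V] {k r : ℕ}

structure IsEdgeMove (G G' : KHypergraph V k) (e : Fin r → Finset V) (v : Fin r → V) (u : V)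
    (e' : Fin r → Finset V) : Prop where
  mem_edges : ∀ i, e i ∈ G.edges
  injective : Function.Injective e
  mem : ∀ i, v i ∈ e i
  notMem : ∀ i, u ∉ e i
  moved_eq : ∀ i, e' i = insert u ((e i).erase (v i))
  injective_moved : Function.Injective e'
  moved_notMem : ∀ i, e' i ∉ G.edges \ image e univ
  edges_eq : G'.edges = (G.edges \ image e univ) ∪ image e' univ

namespace IsEdgeMove

variable {G G' : KHypergraph V k} {e e' : Fin r → Finset V} {v : Fin r → V} {u : V}

theorem sum_edges_add {M : Type*} [AddCommMonoid M] (h : IsEdgeMove G G' e v u e')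
    (F : Finset V → M) :
    ∑ f ∈ G'.edges, F f + ∑ i, F (e i) = ∑ f ∈ G.edges, F f + ∑ i, F (e' i) := by
  have hsub : image e univ ⊆ G.edges := image_subset_iff.2 fun i _ => h.mem_edges i
  have hdisj : Disjoint (G.edges \ image e univ) (image e' univ) :=
    disjoint_right.2 <| forall_mem_image.2 fun i _ => h.moved_notMem i
  rw [h.edges_eq, sum_union hdisj, sum_image h.injective_moved.injOn, ← sum_sdiff hsub,
    sum_image h.injective.injOn, add_right_comm]

theorem lagrangian_le (h : IsEdgeMove G G' e v u e') {x : V → ℝ} (hx : 0 ≤ x)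
    (hxu : ∀ i, x (v i) ≤ x u) : G.lagrangian x ≤ G'.lagrangian x := by
  have hsum := h.sum_edges_add fun f => ∏ w ∈ f, x w
  have hle : ∑ i, ∏ w ∈ e i, x w ≤ ∑ i, ∏ w ∈ e' i, x w := sum_le_sum fun i _ => by
    rw [h.moved_eq i, prod_insert fun hu => h.notMem i (mem_of_mem_erase hu),
      ← mul_prod_erase _ _ (h.mem i)]
    exact mul_le_mul_of_nonneg_right (hxu i) (prod_nonneg fun w _ => hx w)
  unfold lagrangian
  linarith

theorem lagrangianPartial_eq (h : IsEdgeMove G G' e v u e') (y : V → ℝ) :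
    G'.lagrangianPartial u y = G.lagrangianPartial u y + ∑ i, ∏ w ∈ (e i).erase (v i), y w := by
  have hsum := h.sum_edges_add fun f => if u ∈ f then ∏ w ∈ f.erase u, y w else 0
  simp only [h.notMem, h.moved_eq, if_false, mem_insert_self, if_true, sum_const_zero, add_zero,
    erase_insert fun hu => h.notMem _ (mem_of_mem_erase hu)] at hsum
  simp only [lagrangianPartial, sum_filter, hsum]

end IsEdgeMove

end KHypergraph

theorem edge_moving_general {V : Type*} [Fintype V] [DecidableEq V] {k : ℕ} (hk : 3 ≤ k)
    (G G' : KHypergraph V k)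
    (r : ℕ) (hr : 1 ≤ r) (e : Fin r → Finset V) (v : Fin r → V) (u : V)
    (he : ∀ i, e i ∈ G.edges) (heinj : Function.Injective e)
    (hv : ∀ i, v i ∈ e i) (hu : ∀ i, u ∉ e i)
    (e' : Fin r → Finset V) (he' : ∀ i, e' i = insert u ((e i).erase (v i)))
    (hnomul₁ : Function.Injective e')
    (hnomul₂ : ∀ i, e' i ∉ G.edges \ Finset.image e Finset.univ)
    (hG' : G'.edges = (G.edges \ Finset.image e Finset.univ) ∪ Finset.image e' Finset.univ)
    (x : V → ℝ) (hx : IsPerron G x) (hxu : ∀ i, x (v i) ≤ x u) :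
    hSpecRad G < hSpecRad G' := by
  have hmove : KHypergraph.IsEdgeMove G G' e v u e' :=
    ⟨he, heinj, hv, hu, he', hnomul₁, hnomul₂, hG'⟩
  have : Nonempty V := ⟨u⟩
  have hx0 : 0 ≤ x := fun w => (hx.1 w).le
  by_contra! hle
  have hbound : ∀ z, 0 ≤ z → k * G'.lagrangian z ≤ hSpecRad G * ∑ i, z i ^ k := fun z hz =>
    (G'.lagrangian_le_hSpecRad (by omega) hz).trans
      (mul_le_mul_of_nonneg_right hle (sum_nonneg fun i _ => pow_nonneg (hz i) k))
  have hxG' : k * G'.lagrangian x = hSpecRad G * ∑ i, x i ^ k := by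
    refine le_antisymm (hbound x hx0) ?_
    rw [← hx.lagrangian_eq (by omega)]
    exact mul_le_mul_of_nonneg_left (hmove.lagrangian_le hx0 hxu) k.cast_nonneg
  have hpartial := G'.lagrangianPartial_eq_of_forall_le (by omega) hbound hx0 hxG' u
  rw [hmove.lagrangianPartial_eq, hx.lagrangianPartial_eq (by omega), add_eq_left] at hpartial
  have hpos : 0 < ∑ i, ∏ w ∈ (e i).erase (v i), x w :=
    sum_pos (fun i _ => prod_pos fun w _ => hx.1 w) (univ_nonempty_iff.2 ⟨⟨0, hr⟩⟩)
  exact hpos.ne' hpartial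

/-- (Li–Shao–Qi, edge moving.) Let `G'` be obtained from the
connected hypergraph `G` by moving the edges `e 1, …, e r` from the vertices
`v 1, …, v r` to the vertex `u`, creating no multiple edges. If `x` is a
Perron vector of `G` with `x u ≥ max_i x (v i)`, then `ρ(G') > ρ(G)`. -/
theorem edge_moving {V : Type*} [Fintype V] [DecidableEq V] {k : ℕ} (hk : 3 ≤ k)
    (G G' : KHypergraph V k) (hconn : G.Connected)
    (r : ℕ) (hr : 1 ≤ r) (e : Fin r → Finset V) (v : Fin r → V) (u : V)
    (he : ∀ i, e i ∈ G.edges) (heinj : Function.Injective e)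
    (hv : ∀ i, v i ∈ e i) (hu : ∀ i, u ∉ e i)
    (e' : Fin r → Finset V) (he' : ∀ i, e' i = insert u ((e i).erase (v i)))
    (hnomul₁ : Function.Injective e')
    (hnomul₂ : ∀ i, e' i ∉ G.edges \ Finset.image e Finset.univ)
    (hG' : G'.edges = (G.edges \ Finset.image e Finset.univ) ∪ Finset.image e' Finset.univ)
    (x : V → ℝ) (hx : IsPerron G x) (hxu : ∀ i, x (v i) ≤ x u) :
    hSpecRad G < hSpecRad G' :=
  edge_moving_general hk G G' r hr e v u he heinj hv hu e' he' hnomul₁ hnomul₂ hG' x hx hxu
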